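/- arXiv:math/0405351 — 3 statements merged into one kernel-verified Lean document; each statement's English description precedes it below -/
import Mathlib

section
/- Let R be a commutative ring, L a Lie algebra over R, and c : L × L → L an alternating R-bilinear map. Define on the R-module L × L the alternating bilinear bracket [(l₁,m₁),(l₂,m₂)] := ([l₁,l₂], [l₁,m₂] + [m₁,l₂] + c(l₁,l₂)). This bracket satisfies the Jacobi identity (and hence makes L × L a Lie algebra over R, the infinitesimal deformation of L by c) if and only if c is a 2-cocycle, i.e. δc = 0. -/
/-- The bracket of the infinitesimal deformation of a Lie algebra `L` by an alternating bilinear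
map `c : L × L → L`:  `[(l₁,m₁),(l₂,m₂)] = ([l₁,l₂], [l₁,m₂] + [m₁,l₂] + c(l₁,l₂))`. -/
def defBracket {R L : Type*} [CommRing R] [LieRing L] [LieAlgebra R L]
    (c : L →ₗ[R] L →ₗ[R] L) (x y : L × L) : L × L :=
  (⁅x.1, y.1⁆, ⁅x.1, y.2⁆ + ⁅x.2, y.1⁆ + c x.1 y.1)

private lemma jacLL {L : Type*} [LieRing L] (u v w : L) :
    ⁅⁅u, v⁆, w⁆ + ⁅⁅v, w⁆, u⁆ + ⁅⁅w, u⁆, v⁆ = 0 := by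
  have h := lie_jacobi u v w
  rw [← lie_skew (x := ⁅u, v⁆) (y := w), ← lie_skew (x := ⁅v, w⁆) (y := u),
    ← lie_skew (x := ⁅w, u⁆) (y := v)]
  linear_combination (norm := abel) -h

/-- Let `L` be a Lie algebra over a commutative ring `R` and
`c : L × L → L` an alternating `R`-bilinear map.  The bracket
`[(l₁,m₁),(l₂,m₂)] = ([l₁,l₂], [l₁,m₂] + [m₁,l₂] + c(l₁,l₂))` on `L × L` satisfies the Jacobi
identity (and hence makes `L × L` a Lie algebra, the infinitesimal deformation of `L` by `c`)
if and only if `c` is a 2-cocycle, i.e. `δc = 0`. -/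
theorem defBracket_jacobi_iff_cocycle (R L : Type*) [CommRing R] [LieRing L] [LieAlgebra R L]
    (c : L →ₗ[R] L →ₗ[R] L) (halt : ∀ x : L, c x x = 0) :
    (∀ x y z : L × L,
        defBracket c (defBracket c x y) z + defBracket c (defBracket c y z) x +
          defBracket c (defBracket c z x) y = 0) ↔
      (∀ a b d : L,
        ⁅a, c b d⁆ - ⁅b, c a d⁆ + ⁅d, c a b⁆
          - c ⁅a, b⁆ d + c ⁅a, d⁆ b - c ⁅b, d⁆ a = 0) := by
  have hskew : ∀ x y : L, c x y = - c y x := by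
    intro x y
    have h : c y x + c x y = 0 := by
      have h := halt (x + y)
      simp only [map_add, LinearMap.add_apply, halt, zero_add, add_zero] at h
      exact h
    exact eq_neg_of_add_eq_zero_right h
  have keyiff : ∀ a b d : L,
      (⁅c a b, d⁆ + c ⁅a, b⁆ d + ⁅c b d, a⁆ + c ⁅b, d⁆ a + ⁅c d a, b⁆ + c ⁅d, a⁆ b)
        = -(⁅a, c b d⁆ - ⁅b, c a d⁆ + ⁅d, c a b⁆
          - c ⁅a, b⁆ d + c ⁅a, d⁆ b - c ⁅b, d⁆ a) := by
    intro a b d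
    rw [← lie_skew (x := c a b) (y := d), ← lie_skew (x := c b d) (y := a),
      ← lie_skew (x := c d a) (y := b), hskew d a, ← lie_skew (x := d) (y := a)]
    simp only [map_neg, LinearMap.neg_apply, lie_neg, neg_neg]
    abel
  constructor
  · intro hJ a b d
    have h := congrArg Prod.snd (hJ (a, 0) (b, 0) (d, 0))
    simp only [defBracket, lie_zero, zero_lie, zero_add, add_zero, Prod.snd_add,
      Prod.snd_zero] at h
    have h2 := keyiff a b d
    rw [← neg_eq_zero, ← h2]
    calc ⁅c a b, d⁆ + c ⁅a, b⁆ d + ⁅c b d, a⁆ + c ⁅b, d⁆ a + ⁅c d a, b⁆ + c ⁅d, a⁆ b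
        = (⁅c a b, d⁆ + c ⁅a, b⁆ d) + (⁅c b d, a⁆ + c ⁅b, d⁆ a)
            + (⁅c d a, b⁆ + c ⁅d, a⁆ b) := by abel
      _ = 0 := h
  · intro hc x y z
    obtain ⟨a, m⟩ := x; obtain ⟨b, n⟩ := y; obtain ⟨d, p⟩ := z
    have key : ⁅c a b, d⁆ + c ⁅a, b⁆ d + ⁅c b d, a⁆ + c ⁅b, d⁆ a + ⁅c d a, b⁆ + c ⁅d, a⁆ b
        = 0 := by rw [keyiff a b d, hc a b d, neg_zero]
    have j1 := jacLL a b p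
    have j2 := jacLL b d m
    have j3 := jacLL d a n
    ext
    · simpa [defBracket] using jacLL a b d
    · simp only [defBracket, Prod.snd_add, Prod.fst_add, Prod.snd_zero, add_lie]
      linear_combination (norm := abel) j1 + j2 + j3 + key
end

section
/- Let R be a commutative ring, X a set, L the free Lie algebra on X over R, and M a Lie module over L. Then every 2-cocycle is a coboundary: for every alternating R-bilinear map γ : L × L → M satisfying δγ = 0, there exists an R-linear map ψ : L → M with γ = δψ. (Equivalently, H²(L,M) = 0 for a free Lie algebra L.) -/
/-- Let `R` be a commutative ring, `X` a set, `L` the free Lie algebra on `X`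
over `R`, and `M` a Lie module over `L`.  Then every 2-cocycle is a coboundary: for every
alternating `R`-bilinear map `γ : L × L → M` with `δγ = 0` there is an `R`-linear map
`ψ : L → M` with `γ = δψ`.  (Equivalently, `H²(L, M) = 0` for a free Lie algebra `L`.) -/
theorem freeLieAlgebra_H2_eq_zero (R X M : Type*) [CommRing R]
    [AddCommGroup M] [Module R M]
    [LieRingModule (FreeLieAlgebra R X) M] [LieModule R (FreeLieAlgebra R X) M]
    (γ : FreeLieAlgebra R X →ₗ[R] FreeLieAlgebra R X →ₗ[R] M)
    (halt : ∀ a : FreeLieAlgebra R X, γ a a = 0)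
    (hcocycle : ∀ a b d : FreeLieAlgebra R X,
      ⁅a, γ b d⁆ - ⁅b, γ a d⁆ + ⁅d, γ a b⁆
        - γ ⁅a, b⁆ d + γ ⁅a, d⁆ b - γ ⁅b, d⁆ a = 0) :
    ∃ ψ : FreeLieAlgebra R X →ₗ[R] M,
      ∀ a b : FreeLieAlgebra R X, γ a b = ⁅a, ψ b⁆ - ⁅b, ψ a⁆ - ψ ⁅a, b⁆ := by
  classical
  set L := FreeLieAlgebra R X with hLdef
  have hanti : ∀ a b : L, γ a b = - γ b a := by
    intro a b
    have h := halt (a + b)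
    simp only [map_add, LinearMap.add_apply, halt a, halt b, zero_add, add_zero] at h
    rw [eq_neg_iff_add_eq_zero, add_comm]
    exact h
  -- Lie ring structure on the abelian extension M × L
  letI ringE : LieRing (M × L) :=
    { (inferInstance : AddCommGroup (M × L)) with
      bracket := fun x y => (⁅x.2, y.1⁆ - ⁅y.2, x.1⁆ + γ x.2 y.2, ⁅x.2, y.2⁆)
      add_lie := by
        intro x y z
        refine Prod.ext ?_ ?_ <;> dsimp only [Prod.fst_add, Prod.snd_add]
        · simp only [add_lie, lie_add, map_add, LinearMap.add_apply]; abel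
        · simp [add_lie]
      lie_add := by
        intro x y z
        refine Prod.ext ?_ ?_ <;> dsimp only [Prod.fst_add, Prod.snd_add]
        · simp only [add_lie, lie_add, map_add, LinearMap.add_apply]; abel
        · simp [lie_add]
      lie_self := by
        intro x
        refine Prod.ext ?_ ?_ <;> dsimp only
        · simp [halt]
        · simp
      leibniz_lie := by
        intro x y z
        refine Prod.ext ?_ ?_ <;> dsimp only [Prod.fst_add, Prod.snd_add]
        · simp only [lie_add, lie_sub, sub_lie, map_add, map_sub, LinearMap.add_apply,
            LinearMap.sub_apply, lie_lie]
          rw [hanti x.2 ⁅y.2, z.2⁆, hanti y.2 ⁅x.2, z.2⁆]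
          rw [← sub_eq_zero, ← hcocycle x.2 y.2 z.2]
          abel
        · exact leibniz_lie x.2 y.2 z.2 }
  letI algE : LieAlgebra R (M × L) :=
    { lie_smul := by
        intro t x y
        refine Prod.ext ?_ ?_
        · show ⁅x.2, (t • y).1⁆ - ⁅(t • y).2, x.1⁆ + γ x.2 (t • y).2 = t • (⁅x.2, y.1⁆ - ⁅y.2, x.1⁆ + γ x.2 y.2)
          simp only [Prod.smul_fst, Prod.smul_snd, lie_smul, smul_lie, map_smul,
            LinearMap.smul_apply, smul_sub, smul_add]
        · show ⁅x.2, (t • y).2⁆ = t • ⁅x.2, y.2⁆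
          rw [Prod.smul_snd]; exact lie_smul t x.2 y.2 }
  let π : (M × L) →ₗ⁅R⁆ L := { LinearMap.snd R M L with map_lie' := rfl }
  let s : L →ₗ⁅R⁆ (M × L) := FreeLieAlgebra.lift R fun x => ((0 : M), FreeLieAlgebra.of R x)
  have hsnd : ∀ a : L, (s a).2 = a := by
    have : π.comp s = LieHom.id := by
      apply FreeLieAlgebra.hom_ext
      intro x
      simp only [s, LieHom.comp_apply, FreeLieAlgebra.lift_of_apply, LieHom.id_apply]
      rfl
    intro a
    exact LieHom.congr_fun this a
  refine ⟨-(LinearMap.fst R M L ∘ₗ s.toLinearMap), fun a b => ?_⟩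
  have hbr := s.map_lie a b
  have h1 : (s ⁅a, b⁆).1 = ⁅a, (s b).1⁆ - ⁅b, (s a).1⁆ + γ a b := by
    rw [hbr]
    show ⁅(s a).2, (s b).1⁆ - ⁅(s b).2, (s a).1⁆ + γ (s a).2 (s b).2 = _
    rw [hsnd a, hsnd b]
  simp only [LinearMap.neg_apply, LinearMap.comp_apply, LinearMap.fst_apply,
    LieHom.coe_toLinearMap]
  rw [h1]
  simp only [lie_neg, neg_sub, neg_neg, neg_add]
  abel
end

section
/- Let k be a field of characteristic zero, let L be the free Lie algebra over k on a set X, and let y = ι(x₀) be the image of a generator x₀ ∈ X. If f ∈ L satisfies [y, f] = 0, then f is a scalar multiple of y. -/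
noncomputable section
namespace Stmt12

variable (k : Type*) (X : Type*) [Field k]

attribute [local instance 100] LieRing.ofAssociativeRing

/-- The canonical Lie hom from the free Lie algebra into the free (associative) algebra. -/
def sigma : FreeLieAlgebra k X →ₗ⁅k⁆ FreeAlgebra k X :=
  FreeLieAlgebra.lift k (FreeAlgebra.ι k)

@[simp] lemma sigma_of (x : X) : sigma k X (FreeLieAlgebra.of k x) = FreeAlgebra.ι k x :=
  FreeLieAlgebra.lift_of_apply _ _

/-- The action of a generator on `L × k` used to define the Dynkin map. -/
def act (x : X) : Module.End k (FreeLieAlgebra k X × k) where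
  toFun p := (⁅FreeLieAlgebra.of k x, p.1⁆ + p.2 • FreeLieAlgebra.of k x, 0)
  map_add' p q := by
    ext
    · simp [add_smul]; abel
    · simp
  map_smul' c p := by
    ext
    · simp [smul_add, smul_smul]
    · simp

/-- The representation of the free algebra on `L × k`. -/
def rho : FreeAlgebra k X →ₐ[k] Module.End k (FreeLieAlgebra k X × k) :=
  FreeAlgebra.lift k (act k X)

@[simp] lemma rho_ι (x : X) : rho k X (FreeAlgebra.ι k x) = act k X x :=
  FreeAlgebra.lift_ι_apply _ _

/-- The Dynkin map. -/
def delta : FreeAlgebra k X →ₗ[k] FreeLieAlgebra k X where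
  toFun t := (rho k X t (0, 1)).1
  map_add' a b := by simp
  map_smul' c a := by simp

/-- The "constant term" function. -/
def eps : FreeAlgebra k X →ₗ[k] k where
  toFun t := (rho k X t (0, 1)).2
  map_add' a b := by simp
  map_smul' c a := by simp

lemma delta_apply (t : FreeAlgebra k X) : delta k X t = (rho k X t (0, 1)).1 := rfl
lemma eps_apply (t : FreeAlgebra k X) : eps k X t = (rho k X t (0, 1)).2 := rfl

lemma rho_snd (t : FreeAlgebra k X) : ∀ p : FreeLieAlgebra k X × k,
    (rho k X t p).2 = eps k X t * p.2 := by
  induction t using FreeAlgebra.induction with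
  | grade0 r => intro p; simp [eps_apply, Algebra.algebraMap_eq_smul_one]
  | grade1 x => intro p; simp [eps_apply, act]
  | mul a b ha hb =>
    intro p
    rw [eps_apply, map_mul, Module.End.mul_apply, ha, hb, Module.End.mul_apply, ha, hb,
      eps_apply, eps_apply]
    ring
  | add a b ha hb =>
    intro p
    rw [eps_apply, map_add, LinearMap.add_apply, LinearMap.add_apply]
    simp only [Prod.snd_add, ha, hb]
    ring

lemma eps_mul (a b : FreeAlgebra k X) : eps k X (a * b) = eps k X a * eps k X b := by
  rw [eps_apply, map_mul, Module.End.mul_apply, rho_snd, eps_apply, eps_apply]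

@[simp] lemma delta_one : delta k X 1 = 0 := by simp [delta_apply]

@[simp] lemma eps_one : eps k X 1 = 1 := by simp [eps_apply]

lemma delta_ι_mul (x : X) (t : FreeAlgebra k X) :
    delta k X (FreeAlgebra.ι k x * t)
      = ⁅FreeLieAlgebra.of k x, delta k X t⁆ + eps k X t • FreeLieAlgebra.of k x := by
  simp [delta_apply, map_mul, Module.End.mul_apply, act, eps_apply]

@[simp] lemma delta_ι (x : X) : delta k X (FreeAlgebra.ι k x) = FreeLieAlgebra.of k x := by
  have := delta_ι_mul k X x 1
  simpa using this

/-- Induction principle: any Lie subalgebra containing the generators is everything. -/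
theorem mem_of_forall_of (s : LieSubalgebra k (FreeLieAlgebra k X))
    (hs : ∀ x, FreeLieAlgebra.of k x ∈ s) (f : FreeLieAlgebra k X) : f ∈ s := by
  let g : FreeLieAlgebra k X →ₗ⁅k⁆ s :=
    FreeLieAlgebra.lift k (fun x => (⟨FreeLieAlgebra.of k x, hs x⟩ : s))
  have key : s.incl.comp g = LieHom.id := by
    apply FreeLieAlgebra.hom_ext
    intro x
    simp [g, FreeLieAlgebra.lift_of_apply]
  have : s.incl (g f) = f := by
    have := congrArg (fun F : FreeLieAlgebra k X →ₗ⁅k⁆ FreeLieAlgebra k X => F f) key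
    simpa using this
  rw [← this]
  exact (g f).2

@[simp] lemma eps_ι (x : X) : eps k X (FreeAlgebra.ι k x) = 0 := by
  simp [eps_apply, act]

lemma eps_sigma (u : FreeLieAlgebra k X) : eps k X (sigma k X u) = 0 := by
  let s : LieSubalgebra k (FreeLieAlgebra k X) :=
    { carrier := {u | eps k X (sigma k X u) = 0}
      add_mem' := by
        intro a b ha hb
        simp only [Set.mem_setOf_eq] at *
        rw [map_add, map_add, ha, hb, add_zero]
      zero_mem' := by simp only [Set.mem_setOf_eq, map_zero]
      smul_mem' := by
        intro c a ha
        simp only [Set.mem_setOf_eq] at *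
        rw [map_smul, map_smul, ha, smul_zero]
      lie_mem' := by
        intro a b _ _
        simp only [Set.mem_setOf_eq, LieHom.map_lie, Ring.lie_def, map_sub, eps_mul]
        ring }
  exact mem_of_forall_of k X s (fun x => by simp [s]) u

/-- The key bracket identity for the Dynkin map. -/
lemma delta_sigma_mul (u : FreeLieAlgebra k X) (t : FreeAlgebra k X) (ht : eps k X t = 0) :
    delta k X (sigma k X u * t) = ⁅u, delta k X t⁆ := by
  let s : LieSubalgebra k (FreeLieAlgebra k X) :=
    { carrier := {u | ∀ t : FreeAlgebra k X, eps k X t = 0 →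
        delta k X (sigma k X u * t) = ⁅u, delta k X t⁆}
      add_mem' := by
        intro a b ha hb t ht
        rw [map_add, add_mul, map_add, ha t ht, hb t ht, add_lie]
      zero_mem' := by
        intro t ht
        simp only [map_zero, zero_mul, map_zero, zero_lie]
      smul_mem' := by
        intro c a ha t ht
        rw [map_smul, smul_mul_assoc, map_smul, ha t ht, smul_lie]
      lie_mem' := by
        intro a b ha hb t ht
        simp only [Set.mem_setOf_eq] at ha hb
        have hbt : eps k X (sigma k X b * t) = 0 := by rw [eps_mul, ht, mul_zero]
        have hat : eps k X (sigma k X a * t) = 0 := by rw [eps_mul, ht, mul_zero]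
        rw [LieHom.map_lie, Ring.lie_def, sub_mul, map_sub, mul_assoc, mul_assoc,
          ha _ hbt, hb _ hat, ha t ht, hb t ht, lie_lie] }
  have hgen : ∀ x, FreeLieAlgebra.of k x ∈ s := by
    intro x t' ht'
    rw [sigma_of, delta_ι_mul, ht', zero_smul, add_zero]
  exact mem_of_forall_of k X s hgen u t ht

/-- The Euler operator `δ ∘ σ` (multiplies degree-`n` components by `n`). -/
def ee : Module.End k (FreeLieAlgebra k X) := (delta k X).comp (sigma k X).toLinearMap

lemma ee_apply (u : FreeLieAlgebra k X) : ee k X u = delta k X (sigma k X u) := rfl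

@[simp] lemma ee_of (x : X) : ee k X (FreeLieAlgebra.of k x) = FreeLieAlgebra.of k x := by
  rw [ee_apply, sigma_of, delta_ι]

lemma ee_lie (u v : FreeLieAlgebra k X) :
    ee k X ⁅u, v⁆ = ⁅ee k X u, v⁆ + ⁅u, ee k X v⁆ := by
  rw [ee_apply, LieHom.map_lie, Ring.lie_def, map_sub,
    delta_sigma_mul k X u _ (eps_sigma k X v), delta_sigma_mul k X v _ (eps_sigma k X u),
    ← ee_apply, ← ee_apply, ← lie_skew v (ee k X u)]
  abel

/-- The supremum of positive-integer eigenspaces of the Euler operator, as a Lie subalgebra. -/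
def S : LieSubalgebra k (FreeLieAlgebra k X) where
  toSubmodule := ⨆ n : ℕ, Module.End.eigenspace (ee k X) ((n + 1 : ℕ) : k)
  lie_mem' := by
    intro u v hu hv
    change u ∈ ⨆ n : ℕ, Module.End.eigenspace (ee k X) ((n + 1 : ℕ) : k) at hu
    change v ∈ ⨆ n : ℕ, Module.End.eigenspace (ee k X) ((n + 1 : ℕ) : k) at hv
    change ⁅u, v⁆ ∈ ⨆ n : ℕ, Module.End.eigenspace (ee k X) ((n + 1 : ℕ) : k)
    induction hu using Submodule.iSup_induction' with
    | mem m u hu =>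
      induction hv using Submodule.iSup_induction' with
      | mem n v hv =>
        refine Submodule.mem_iSup_of_mem (m + n + 1) ?_
        rw [Module.End.mem_eigenspace_iff] at hu hv ⊢
        rw [ee_lie, hu, hv, smul_lie, lie_smul, ← add_smul]
        congr 1
        push_cast
        ring
      | zero => simp
      | add v w _ _ hv hw =>
        rw [lie_add]
        exact Submodule.add_mem _ hv hw
    | zero => simp
    | add u w _ _ hu hw =>
      rw [add_lie]
      exact Submodule.add_mem _ hu hw

lemma mem_S (f : FreeLieAlgebra k X) :
    f ∈ ⨆ n : ℕ, Module.End.eigenspace (ee k X) ((n + 1 : ℕ) : k) := by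
  refine mem_of_forall_of k X (S k X) (fun x => ?_) f
  show FreeLieAlgebra.of k x ∈ ⨆ n : ℕ, Module.End.eigenspace (ee k X) ((n + 1 : ℕ) : k)
  refine Submodule.mem_iSup_of_mem 0 ?_
  rw [Module.End.mem_eigenspace_iff]
  simp


section Centralizer

open MonoidAlgebra

open scoped Classical in
noncomputable def lead (x₀ : X) : List X → ℕ
  | [] => 0
  | c :: t => if c = x₀ then lead x₀ t + 1 else 0

variable {X}

lemma lead_cons_pos (x₀ : X) (t : List X) :
    lead X x₀ (x₀ :: t) = lead X x₀ t + 1 := by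
  rw [lead, if_pos rfl]

lemma lead_cons_neg {x₀ c : X} (hc : c ≠ x₀) (t : List X) :
    lead X x₀ (c :: t) = 0 := by
  rw [lead, if_neg hc]

lemma lead_append (x₀ : X) (l l' : List X) (h : ∃ d ∈ l, d ≠ x₀) :
    lead X x₀ (l ++ l') = lead X x₀ l := by
  induction l with
  | nil => rcases h with ⟨d, hd, _⟩; cases hd
  | cons c t ih =>
    by_cases hc : c = x₀
    · subst hc
      rw [List.cons_append, lead_cons_pos, lead_cons_pos, ih]
      rcases h with ⟨d, hd, hd'⟩
      rcases List.mem_cons.mp hd with rfl | hdt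
      · exact absurd rfl hd'
      · exact ⟨d, hdt, hd'⟩
    · rw [List.cons_append, lead_cons_neg hc, lead_cons_neg hc]

variable {k} (x₀ : X)

lemma toList_pow (n : ℕ) :
    FreeMonoid.toList (FreeMonoid.of x₀ ^ n) = List.replicate n x₀ := by
  induction n with
  | zero => rfl
  | succ n ih => rw [pow_succ', FreeMonoid.toList_mul, ih]; rfl

lemma power_iff (w : FreeMonoid X) :
    (∃ n, w = FreeMonoid.of x₀ ^ n) ↔ ∀ c ∈ FreeMonoid.toList w, c = x₀ := by
  constructor
  · rintro ⟨n, rfl⟩ c hc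
    rw [toList_pow] at hc
    exact List.eq_of_mem_replicate hc
  · intro h
    refine ⟨(FreeMonoid.toList w).length, FreeMonoid.toList.injective ?_⟩
    rw [toList_pow]
    exact List.eq_replicate_iff.mpr ⟨rfl, h⟩

lemma lmul_eq (a : FreeMonoid X) (P : MonoidAlgebra k (FreeMonoid X)) :
    single a 1 * P = MonoidAlgebra.mapDomain (fun w => a * w) P := by
  induction P using MonoidAlgebra.induction_linear with
  | zero => simp
  | add f g hf hg => rw [mul_add, MonoidAlgebra.mapDomain_add, hf, hg]
  | single w c => rw [MonoidAlgebra.single_mul_single, MonoidAlgebra.mapDomain_single, one_mul]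

lemma rmul_eq (a : FreeMonoid X) (P : MonoidAlgebra k (FreeMonoid X)) :
    P * single a 1 = MonoidAlgebra.mapDomain (fun w => w * a) P := by
  induction P using MonoidAlgebra.induction_linear with
  | zero => simp
  | add f g hf hg => rw [add_mul, MonoidAlgebra.mapDomain_add, hf, hg]
  | single w c => rw [MonoidAlgebra.single_mul_single, MonoidAlgebra.mapDomain_single, mul_one]

lemma coeff_eq_zero (P : MonoidAlgebra k (FreeMonoid X))
    (hP : single (FreeMonoid.of x₀) 1 * P = P * single (FreeMonoid.of x₀) 1)
    (w : FreeMonoid X) (hw : ¬ ∃ n : ℕ, w = FreeMonoid.of x₀ ^ n) : P.coeff w = 0 := by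
  set a : FreeMonoid X := FreeMonoid.of x₀ with ha
  have hmap : MonoidAlgebra.mapDomain (fun w => a * w) P = MonoidAlgebra.mapDomain (fun w => w * a) P := by
    rw [← lmul_eq, ← rmul_eq, hP]
  have hL : Function.Injective (fun w : FreeMonoid X => a * w) :=
    fun u v h => mul_left_cancel h
  have hR : Function.Injective (fun w : FreeMonoid X => w * a) :=
    fun u v h => mul_right_cancel h
  have key : ∀ w : FreeMonoid X, P.coeff w = Finsupp.mapDomain (fun w => w * a) P.coeff (a * w) := by
    intro w
    show _ = (MonoidAlgebra.mapDomain (fun w => w * a) P).coeff (a * w)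
    rw [← hmap]
    exact (Finsupp.mapDomain_apply hL _ _).symm
  -- Case A: if the last letter of `w` is not `x₀`, the coefficient vanishes.
  have caseA : ∀ (w : FreeMonoid X) (v : List X) (c : X),
      FreeMonoid.toList w = v ++ [c] → c ≠ x₀ → P.coeff w = 0 := by
    intro w v c hvc hc
    rw [key, Finsupp.mapDomain_of_notMem_range]
    rintro ⟨u, hu⟩
    apply hc
    have h2 := congrArg (fun z => (FreeMonoid.toList z).reverse) hu
    simp only [FreeMonoid.toList_mul, List.reverse_append, hvc, FreeMonoid.toList_of,
      List.reverse_singleton, List.reverse_cons, List.singleton_append, List.cons_append,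
      List.nil_append] at h2
    exact ((List.cons_eq_cons.mp h2).1).symm
  suffices H : ∀ (N : ℕ) (w : FreeMonoid X),
      lead X x₀ (FreeMonoid.toList w).reverse ≤ N →
      (¬ ∃ n : ℕ, w = FreeMonoid.of x₀ ^ n) → P.coeff w = 0 from
    H _ w le_rfl hw
  intro N
  induction N with
  | zero =>
    intro w hN hw
    rcases List.eq_nil_or_concat' (FreeMonoid.toList w) with hnil | ⟨v, c, hvc⟩
    · exact absurd ⟨0, FreeMonoid.toList.injective (by rw [toList_pow]; simpa using hnil)⟩ hw
    refine caseA w v c hvc fun hcx => ?_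
    rw [hcx] at hvc
    rw [hvc, List.reverse_append, List.reverse_singleton, List.singleton_append,
      lead_cons_pos] at hN
    omega
  | succ N ih =>
    intro w hN hw
    rcases List.eq_nil_or_concat' (FreeMonoid.toList w) with hnil | ⟨v, c, hvc⟩
    · exact absurd ⟨0, FreeMonoid.toList.injective (by rw [toList_pow]; simpa using hnil)⟩ hw
    by_cases hc : c = x₀
    · rw [hc] at hvc
      -- rotation step
      have hv : ∃ d ∈ v, d ≠ x₀ := by
        by_contra hall
        push_neg at hall
        apply hw
        rw [power_iff]
        intro d hd
        rw [hvc] at hd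
        rcases List.mem_append.mp hd with hdv | hdc
        · exact hall d hdv
        · simpa using hdc
      set w' : FreeMonoid X := a * FreeMonoid.ofList v with hw'def
      have htw' : FreeMonoid.toList w' = x₀ :: v := rfl
      have hfac : a * w = w' * a := by
        apply FreeMonoid.toList.injective
        simp only [FreeMonoid.toList_mul, htw', hvc, ha, FreeMonoid.toList_of]
        simp
      have hPw : P.coeff w = P.coeff w' := by
        rw [key, hfac]
        exact Finsupp.mapDomain_apply hR P.coeff w'
      have hw'pow : ¬ ∃ n : ℕ, w' = FreeMonoid.of x₀ ^ n := by
        intro hpow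
        rcases hv with ⟨d, hd, hd'⟩
        apply hd'
        exact (power_iff x₀ w').mp hpow d (by rw [htw']; exact List.mem_cons_of_mem _ hd)
      have hmeas : lead X x₀ (FreeMonoid.toList w').reverse ≤ N := by
        rw [hvc, List.reverse_append, List.reverse_singleton, List.singleton_append,
          lead_cons_pos] at hN
        rw [htw', List.reverse_cons, lead_append]
        · omega
        · rcases hv with ⟨d, hd, hd'⟩
          exact ⟨d, List.mem_reverse.mpr hd, hd'⟩
      rw [hPw]
      exact ih w' hmeas hw'pow
    · exact caseA w v c hvc hc

lemma mem_span_powers (P : MonoidAlgebra k (FreeMonoid X))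
    (hP : single (FreeMonoid.of x₀) 1 * P = P * single (FreeMonoid.of x₀) 1) :
    P ∈ Submodule.span k
      (Set.range fun n : ℕ => (single (FreeMonoid.of x₀) 1 : MonoidAlgebra k (FreeMonoid X)) ^ n) := by
  have hsupp : P ∈ MonoidAlgebra.supported k k (Set.range fun n : ℕ => FreeMonoid.of x₀ ^ n) := by
    rw [MonoidAlgebra.mem_supported]
    intro w hwsupp
    by_contra hww
    refine (Finsupp.mem_support_iff.mp hwsupp) (coeff_eq_zero x₀ P hP w ?_)
    rintro ⟨n, rfl⟩
    exact hww ⟨n, rfl⟩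
  rw [MonoidAlgebra.supported_eq_span_single] at hsupp
  have himg : ((fun i => MonoidAlgebra.single i (1:k)) '' Set.range fun n : ℕ => FreeMonoid.of x₀ ^ n)
      = Set.range fun n : ℕ => (single (FreeMonoid.of x₀) 1 : MonoidAlgebra k (FreeMonoid X)) ^ n := by
    rw [← Set.range_comp]
    apply congrArg Set.range
    funext n
    simp only [Function.comp_apply, MonoidAlgebra.single_pow, one_pow]
  rwa [himg] at hsupp

variable (k)

theorem central (F : FreeAlgebra k X)
    (hc : FreeAlgebra.ι k x₀ * F = F * FreeAlgebra.ι k x₀) :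
    F ∈ Submodule.span k (Set.range fun n : ℕ => (FreeAlgebra.ι k x₀ : FreeAlgebra k X) ^ n) := by
  set Φ : FreeAlgebra k X ≃ₐ[k] MonoidAlgebra k (FreeMonoid X) := FreeAlgebra.equivMonoidAlgebraFreeMonoid with hΦdef
  have hΦι : Φ (FreeAlgebra.ι k x₀) = single (FreeMonoid.of x₀) 1 := by
    show (FreeAlgebra.lift k fun x => MonoidAlgebra.of k (FreeMonoid X) (FreeMonoid.of x))
      (FreeAlgebra.ι k x₀) = _
    rw [FreeAlgebra.lift_ι_apply]
    rfl
  have hP : single (FreeMonoid.of x₀) 1 * Φ F = Φ F * single (FreeMonoid.of x₀) 1 := by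
    rw [← hΦι, ← map_mul, ← map_mul, hc]
  have h1 := mem_span_powers x₀ (Φ F) hP
  have h2 : Φ.symm (Φ F) ∈ Submodule.map (Φ.symm : MonoidAlgebra k (FreeMonoid X) ≃ₐ[k] FreeAlgebra k X).toLinearMap
      (Submodule.span k (Set.range fun n : ℕ =>
        (single (FreeMonoid.of x₀) 1 : MonoidAlgebra k (FreeMonoid X)) ^ n)) :=
    Submodule.mem_map_of_mem h1
  rw [Submodule.map_span, AlgEquiv.symm_apply_apply] at h2
  have himg : ((Φ.symm : MonoidAlgebra k (FreeMonoid X) ≃ₐ[k] FreeAlgebra k X).toLinearMap ''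
      (Set.range fun n : ℕ => (single (FreeMonoid.of x₀) 1 : MonoidAlgebra k (FreeMonoid X)) ^ n))
      = Set.range fun n : ℕ => (FreeAlgebra.ι k x₀ : FreeAlgebra k X) ^ n := by
    rw [← Set.range_comp]
    apply congrArg Set.range
    funext n
    simp only [Function.comp_apply, AlgHom.toLinearMap_apply]
    rw [show ((Φ.symm : MonoidAlgebra k (FreeMonoid X) ≃ₐ[k] FreeAlgebra k X).toLinearMap
      ((single (FreeMonoid.of x₀) 1 : MonoidAlgebra k (FreeMonoid X)) ^ n)) = Φ.symm ((single (FreeMonoid.of x₀) 1) ^ n) from rfl,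
      map_pow, ← hΦι, AlgEquiv.symm_apply_apply]
  rwa [himg] at h2

end Centralizer


lemma rho_pow_gen (x₀ : X) :
    ∀ n : ℕ, rho k X (FreeAlgebra.ι k x₀ ^ (n + 1)) (FreeLieAlgebra.of k x₀, 0) = 0 := by
  intro n
  induction n with
  | zero =>
    rw [pow_one, rho_ι]
    show (⁅FreeLieAlgebra.of k x₀, FreeLieAlgebra.of k x₀⁆
      + (0:k) • FreeLieAlgebra.of k x₀, (0:k)) = 0
    rw [lie_self, zero_smul, add_zero]
    rfl
  | succ n ih =>
    rw [pow_succ', map_mul, Module.End.mul_apply, ih, map_zero]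

lemma delta_pow_mem (x₀ : X) (n : ℕ) :
    delta k X (FreeAlgebra.ι k x₀ ^ n) ∈ Submodule.span k {FreeLieAlgebra.of k x₀} := by
  match n with
  | 0 => rw [pow_zero, delta_one]; exact Submodule.zero_mem _
  | 1 => rw [pow_one, delta_ι]; exact Submodule.mem_span_singleton_self _
  | (m + 2) =>
    have h0 : rho k X (FreeAlgebra.ι k x₀) (0, 1) = (FreeLieAlgebra.of k x₀, 0) := by
      rw [rho_ι]
      show (⁅FreeLieAlgebra.of k x₀, (0 : FreeLieAlgebra k X)⁆
        + (1:k) • FreeLieAlgebra.of k x₀, (0:k)) = _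
      rw [lie_zero, zero_add, one_smul]
    have h1 := rho_pow_gen k X x₀ 0
    rw [zero_add, pow_one] at h1
    have key : ∀ j : ℕ, rho k X (FreeAlgebra.ι k x₀ ^ (j + 2)) (0, 1) = 0 := by
      intro j
      induction j with
      | zero => rw [pow_two, map_mul, Module.End.mul_apply, h0, h1]
      | succ j ihj =>
        have hx : FreeAlgebra.ι k x₀ ^ (j + 3)
            = FreeAlgebra.ι k x₀ * FreeAlgebra.ι k x₀ ^ (j + 2) := (pow_succ' _ _)
        rw [hx, map_mul, Module.End.mul_apply, ihj, map_zero]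
    have : delta k X (FreeAlgebra.ι k x₀ ^ (m + 2)) = 0 := by
      rw [delta_apply, key m]
      rfl
    rw [this]; exact Submodule.zero_mem _

lemma delta_central_mem (x₀ : X) (t : FreeAlgebra k X)
    (ht : t ∈ Submodule.span k (Set.range fun n : ℕ => (FreeAlgebra.ι k x₀ : FreeAlgebra k X) ^ n)) :
    delta k X t ∈ Submodule.span k {FreeLieAlgebra.of k x₀} := by
  induction ht using Submodule.span_induction with
  | mem t h => obtain ⟨n, rfl⟩ := h; exact delta_pow_mem k X x₀ n
  | zero => rw [map_zero]; exact Submodule.zero_mem _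
  | add a b _ _ ha hb => rw [map_add]; exact Submodule.add_mem _ ha hb
  | smul c a _ ha => rw [map_smul]; exact Submodule.smul_mem _ c ha


theorem main [CharZero k] (x₀ : X) (f : FreeLieAlgebra k X)
    (h : ⁅FreeLieAlgebra.of k x₀, f⁆ = 0) :
    ∃ c : k, f = c • FreeLieAlgebra.of k x₀ := by
  classical
  set y := FreeLieAlgebra.of k x₀ with hy
  have hf := mem_S k X f
  rw [Submodule.mem_iSup_iff_exists_dfinsupp'] at hf
  obtain ⟨g, hg⟩ := hf
  set ady : FreeLieAlgebra k X →+ FreeLieAlgebra k X :=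
    AddMonoidHom.mk' (fun u => ⁅y, u⁆) (lie_add y) with hady
  have hcomp : ∀ (n : ℕ) (u : FreeLieAlgebra k X),
      u ∈ Module.End.eigenspace (ee k X) ((n + 1 : ℕ) : k) →
      ⁅y, u⁆ ∈ Module.End.eigenspace (ee k X) ((n + 2 : ℕ) : k) := by
    intro n u hu
    rw [Module.End.mem_eigenspace_iff] at hu ⊢
    rw [ee_lie, hy, ee_of, ← hy, hu, lie_smul]
    have hcast : ((n + 2 : ℕ) : k) = 1 + ((n + 1 : ℕ) : k) := by push_cast; ring
    rw [hcast, add_smul, one_smul]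
  set dh : Π₀ n : ℕ, (Module.End.eigenspace (ee k X) ((n + 2 : ℕ) : k)) :=
    DFinsupp.mapRange
      (fun n (u : Module.End.eigenspace (ee k X) ((n + 1 : ℕ) : k)) => (⟨⁅y, (u : FreeLieAlgebra k X)⁆, hcomp n _ u.2⟩ :
        Module.End.eigenspace (ee k X) ((n + 2 : ℕ) : k)))
      (fun n => by ext; simp) g with hdh
  have hind : iSupIndep (fun n : ℕ => Module.End.eigenspace (ee k X) ((n + 2 : ℕ) : k)) := by
    have hinj : Function.Injective (fun n : ℕ => ((n + 2 : ℕ) : k)) := by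
      intro a b hab
      have := Nat.cast_injective (R := k) hab
      omega
    exact (Module.End.eigenspaces_iSupIndep (ee k X)).comp hinj
  have hsum0 : (DFinsupp.lsum ℕ fun n =>
      (Module.End.eigenspace (ee k X) ((n + 2 : ℕ) : k)).subtype) dh = 0 := by
    rw [DFinsupp.lsum_apply_apply, DFinsupp.sumAddHom_apply]
    simp only [LinearMap.toAddMonoidHom_coe, Submodule.coe_subtype]
    have e1 : (dh.sum fun _ u => (u : FreeLieAlgebra k X))
        = ∑ i ∈ g.support, ⁅y, (g i : FreeLieAlgebra k X)⁆ := by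
      rw [DFinsupp.sum]
      rw [Finset.sum_subset (DFinsupp.support_mapRange)
        (fun i _ hin => by rw [DFinsupp.notMem_support_iff.mp hin]; rfl)]
      exact Finset.sum_congr rfl fun i _ => by rw [hdh, DFinsupp.mapRange_apply]
    rw [e1]
    have e2 : ∑ i ∈ g.support, ⁅y, (g i : FreeLieAlgebra k X)⁆
        = ⁅y, ∑ i ∈ g.support, (g i : FreeLieAlgebra k X)⁆ :=
      (map_sum ady (fun i => ((g i : FreeLieAlgebra k X))) g.support).symm
    rw [e2]
    have e3 : ∑ i ∈ g.support, (g i : FreeLieAlgebra k X) = f := hg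
    rw [e3, h]
  have hdh0 : dh = 0 := by
    apply hind.dfinsupp_lsum_injective
    rw [hsum0, map_zero]
  have hbz : ∀ n : ℕ, ⁅y, (g n : FreeLieAlgebra k X)⁆ = 0 := by
    intro n
    have h5 := congrArg (fun d : Π₀ n : ℕ,
      (Module.End.eigenspace (ee k X) ((n + 2 : ℕ) : k)) => ((d n : _) : FreeLieAlgebra k X)) hdh0
    simpa [hdh, DFinsupp.mapRange_apply] using h5
  have hcy : ∀ n : ℕ, (g n : FreeLieAlgebra k X) ∈ Submodule.span k {y} := by
    intro n
    have h2 : sigma k X ⁅y, (g n : FreeLieAlgebra k X)⁆ = 0 := by rw [hbz n, map_zero]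
    rw [LieHom.map_lie, Ring.lie_def, hy, sigma_of] at h2
    have hcomm : FreeAlgebra.ι k x₀ * sigma k X (g n : FreeLieAlgebra k X)
        = sigma k X (g n : FreeLieAlgebra k X) * FreeAlgebra.ι k x₀ := sub_eq_zero.mp h2
    have h3 := central k x₀ _ hcomm
    have h4 := delta_central_mem k X x₀ _ h3
    rw [← ee_apply] at h4
    have hgn := (g n).2
    rw [Module.End.mem_eigenspace_iff] at hgn
    rw [hgn] at h4
    have hne : ((n + 1 : ℕ) : k) ≠ 0 := Nat.cast_ne_zero.mpr (Nat.succ_ne_zero n)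
    have h6 := Submodule.smul_mem _ (((n + 1 : ℕ) : k)⁻¹) h4
    rwa [inv_smul_smul₀ hne] at h6
  have hfs : f ∈ Submodule.span k {y} := by
    rw [← hg]
    exact Submodule.sum_mem _ fun i _ => hcy i
  obtain ⟨c, hc⟩ := Submodule.mem_span_singleton.mp hfs
  exact ⟨c, hc.symm⟩

end Stmt12
end

/-- Let `k` be a field of characteristic zero, `L` the free Lie algebra over
`k` on a set `X`, and `y = ι x₀` the image of a generator `x₀ ∈ X`.  If `f ∈ L` satisfies
`⁅y, f⁆ = 0`, then `f` is a scalar multiple of `y`. -/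
theorem freeLieAlgebra_centralizer_of_generator (k X : Type*) [Field k] [CharZero k]
    (x₀ : X) (f : FreeLieAlgebra k X)
    (h : ⁅FreeLieAlgebra.of k x₀, f⁆ = 0) :
    ∃ c : k, f = c • FreeLieAlgebra.of k x₀ :=
  Stmt12.main k X x₀ f h
end
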